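/- Stationary performance of TSR-DFT: if m is additionally continuous on (0, ∞) and 1/m(η) − η > 0 for all η > 0, then the limit η^∞ = lim_{t→∞} η^{t+1} of the TSR state-evolution SNR sequence exists, lies in (0, M/(N·σ²)], and satisfies σ²·m(η^∞)·(η^∞)² − (m(η^∞) + σ²)·η^∞ + M/N = 0, i.e., the fixed-point equation (34) characterizing the replica-predicted optimal MMSE performance. -/

import Mathlib

/-!
The variances `v^t` decrease: `ψ ∘ φ` is monotone, being the composite of two antitone maps,
and `v¹ ≤ 1 = v⁰` because `m(η) ≤ 1/(1+η)` forces `ψ ≤ 1`. Hence the SNRs `η^{t+1} = φ(v^t)`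
increase and stay below `φ(0) = M/(Nσ²)`, so they converge. Continuity of `m` makes the limit a
fixed point of `φ ∘ ψ`, and clearing denominators in `η = φ(ψ(η))` gives equation (34).
-/

open Filter Set Function Topology

theorem mem_of_succ_eq_of_mapsTo {α : Type*} {G : α → α} {s : Set α} {v : ℕ → α}
    (hGs : MapsTo G s s) (hv0 : v 0 ∈ s) (hv : ∀ t, v (t + 1) = G (v t)) (t : ℕ) : v t ∈ s := by
  induction t with
  | zero => exact hv0
  | succ t ih => exact hv t ▸ hGs ih

theorem antitone_of_succ_eq_of_monotoneOn {α : Type*} [Preorder α] {G : α → α} {s : Set α}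
    {v : ℕ → α} (hG : MonotoneOn G s) (hGs : MapsTo G s s) (hv0 : v 0 ∈ s)
    (hv : ∀ t, v (t + 1) = G (v t)) (hv1 : v 1 ≤ v 0) : Antitone v := by
  have hmem := mem_of_succ_eq_of_mapsTo hGs hv0 hv
  refine antitone_nat_of_succ_le fun t => ?_
  induction t with
  | zero => exact hv1
  | succ t ih =>
    rw [hv (t + 1)]
    exact (hG (hmem (t + 1)) (hmem t) ih).trans_eq (hv t).symm

theorem isFixedPt_of_tendsto_of_succ_eq {α : Type*} [TopologicalSpace α] [T2Space α]
    {F : α → α} {x : ℕ → α} {L : α} (hx : Tendsto x atTop (𝓝 L)) (hF : ContinuousAt F L)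
    (hrec : ∀ t, x (t + 1) = F (x t)) : IsFixedPt F L := by
  have hshift : Tendsto (fun t => x (t + 1)) atTop (𝓝 L) := hx.comp (tendsto_add_atTop_nat 1)
  simp only [hrec] at hshift
  exact tendsto_nhds_unique (hF.tendsto.comp hx) hshift

theorem antitoneOn_inv_of_monotoneOn {α β : Type*} [Preorder α] [Field β] [LinearOrder β]
    [IsStrictOrderedRing β] {f : α → β} {s : Set α} (hf : MonotoneOn f s)
    (hpos : ∀ x ∈ s, 0 < f x) : AntitoneOn (fun x => (f x)⁻¹) s :=
  fun _ hx _ hy hxy => inv_anti₀ (hpos _ hx) (hf hx hy hxy)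

theorem antitoneOn_inv_affine {a b : ℝ} (ha : 0 ≤ a) (hb : 0 < b) :
    AntitoneOn (fun v => (a * v + b)⁻¹) (Ici 0) :=
  antitoneOn_inv_of_monotoneOn (fun _ _ _ _ huw => by gcongr)
    fun v hv => by have : 0 ≤ v := hv; positivity

theorem mapsTo_inv_affine {a b : ℝ} (ha : 0 ≤ a) (hb : 0 < b) :
    MapsTo (fun v => (a * v + b)⁻¹) (Ici 0) (Ioi 0) :=
  fun v hv => by have : 0 ≤ v := hv; simp only [mem_Ioi]; positivity

theorem one_le_one_div_sub_of_le_one_div_one_add {μ η : ℝ} (hμ : 0 < μ) (hle : μ ≤ 1 / (1 + η)) :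
    1 ≤ 1 / μ - η := by
  have h1η : 0 < 1 + η := one_div_pos.mp (hμ.trans_le hle)
  have := (le_one_div h1η hμ).mpr hle
  linarith

theorem quadratic_eq_zero_of_fixedPoint {M N σ2 μ η : ℝ} (hM : M ≠ 0) (hN : N ≠ 0) (hμ : μ ≠ 0)
    (hgap : 1 / μ - η ≠ 0) (hη : η ≠ 0)
    (hfix : ((N - M) / M * (1 / μ - η)⁻¹ + N / M * σ2)⁻¹ = η) :
    σ2 * μ * η ^ 2 - (μ + σ2) * η + M / N = 0 := by
  have hgap' : 1 - μ * η ≠ 0 := fun h => hgap (by field_simp; linarith)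
  rw [inv_eq_iff_eq_inv] at hfix
  field_simp at hfix
  field_simp
  linear_combination -hfix

theorem continuousAt_inv_affine_inv_one_div_sub {m : ℝ → ℝ} {a b L : ℝ} (hm : ContinuousAt m L)
    (hmL : m L ≠ 0) (hgap : 1 / m L - L ≠ 0) (hden : a * (1 / m L - L)⁻¹ + b ≠ 0) :
    ContinuousAt (fun x => (a * (1 / m x - x)⁻¹ + b)⁻¹) L := by
  fun_prop (disch := assumption)

theorem monotone_alternating_of_antitoneOn {φ ψ : ℝ → ℝ} (hφ : AntitoneOn φ (Ici 0))
    (hφpos : MapsTo φ (Ici 0) (Ioi 0)) (hψ : AntitoneOn ψ (Ioi 0))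
    (hψnn : MapsTo ψ (Ioi 0) (Ici 0)) {v η : ℕ → ℝ} (hv0 : 0 ≤ v 0) (hv1 : ψ (φ (v 0)) ≤ v 0)
    (hη : ∀ t, η (t + 1) = φ (v t)) (hv : ∀ t, v (t + 1) = ψ (η (t + 1))) :
    Monotone (fun t => η (t + 1)) ∧ ∀ t, η (t + 1) ∈ Ioc 0 (φ 0) := by
  have hrec : ∀ t, v (t + 1) = (ψ ∘ φ) (v t) := fun t => by rw [hv, hη]; rfl
  have hanti : Antitone v := antitone_of_succ_eq_of_monotoneOn (hψ.comp hφ hφpos)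
    (hψnn.comp hφpos) hv0 hrec (by rw [hrec]; exact hv1)
  have hvnn : ∀ t, v t ∈ Ici 0 := mem_of_succ_eq_of_mapsTo (hψnn.comp hφpos) hv0 hrec
  refine ⟨fun s t hst => by simpa only [hη] using hφ (hvnn t) (hvnn s) (hanti hst), fun t => ?_⟩
  rw [hη]
  exact ⟨hφpos (hvnn t), hφ self_mem_Ici (hvnn t) (hvnn t)⟩

theorem tsr_stationary_performance_general (M N σ2 : ℝ) (hM : 0 < M) (hMN : M < N) (hσ2 : 0 < σ2)
    (m : ℝ → ℝ)
    (hm : ∀ η > (0 : ℝ), 0 < m η ∧ m η ≤ 1 / (1 + η))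
    (hf : ∀ η₁ η₂ : ℝ, 0 < η₁ → η₁ ≤ η₂ → 1 / m η₁ - η₁ ≤ 1 / m η₂ - η₂)
    (hcont : ContinuousOn m (Set.Ioi 0))
    (v η : ℕ → ℝ) (hv0 : v 0 = 1)
    (hη : ∀ t : ℕ, η (t + 1) = (((N - M) / M) * v t + (N / M) * σ2)⁻¹)
    (hv : ∀ t : ℕ, v (t + 1) = (1 / m (η (t + 1)) - η (t + 1))⁻¹) :
    ∃ ηinf : ℝ, ηinf ∈ Set.Ioc (0 : ℝ) (M / (N * σ2)) ∧
      Tendsto (fun t : ℕ => η (t + 1)) atTop (nhds ηinf) ∧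
      σ2 * m ηinf * ηinf ^ 2 - (m ηinf + σ2) * ηinf + M / N = 0 := by
  have hN : 0 < N := hM.trans hMN
  have ha : 0 ≤ (N - M) / M := div_nonneg (sub_nonneg.mpr hMN.le) hM.le
  have hb : 0 < N / M * σ2 := by positivity
  have hgap : ∀ η > 0, 1 ≤ 1 / m η - η := fun η hη =>
    one_le_one_div_sub_of_le_one_div_one_add (hm η hη).1 (hm η hη).2
  have hψ : AntitoneOn (fun η => (1 / m η - η)⁻¹) (Ioi 0) :=
    antitoneOn_inv_of_monotoneOn (fun η₁ h₁ η₂ _ h => hf η₁ η₂ h₁ h)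
      fun η hη => one_pos.trans_le (hgap η hη)
  have hv0nn : v 0 ∈ Ici 0 := hv0 ▸ mem_Ici.mpr zero_le_one
  obtain ⟨hmono, hbound⟩ := monotone_alternating_of_antitoneOn (antitoneOn_inv_affine ha hb)
    (mapsTo_inv_affine ha hb) hψ (fun η hη => (inv_pos.mpr (one_pos.trans_le (hgap η hη))).le)
    hv0nn (hv0 ▸ inv_le_one_of_one_le₀ (hgap _ (mapsTo_inv_affine ha hb hv0nn))) hη hv
  obtain ⟨L, hlim⟩ : ∃ L, Tendsto (fun t => η (t + 1)) atTop (𝓝 L) :=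
    ⟨_, tendsto_atTop_ciSup hmono ⟨_, forall_mem_range.mpr fun t => (hbound t).2⟩⟩
  have hL : 0 < L := (hbound 0).1.trans_le (hmono.ge_of_tendsto hlim 0)
  have hmL : 0 < m L := (hm L hL).1
  have hgapL : 0 < 1 / m L - L := one_pos.trans_le (hgap L hL)
  have hden := add_pos_of_nonneg_of_pos (mul_nonneg ha (inv_pos.mpr hgapL).le) hb
  have hfix := isFixedPt_of_tendsto_of_succ_eq hlim (continuousAt_inv_affine_inv_one_div_sub
    (hcont.continuousAt (Ioi_mem_nhds hL)) hmL.ne' hgapL.ne' hden.ne') fun t => by rw [hη, hv]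
  refine ⟨L, ⟨hL, ?_⟩, hlim,
    quadratic_eq_zero_of_fixedPoint hM.ne' hN.ne' hmL.ne' hgapL.ne' hL.ne' hfix⟩
  calc L ≤ ((N - M) / M * 0 + N / M * σ2)⁻¹ := le_of_tendsto' hlim fun t => (hbound t).2
    _ = M / (N * σ2) := by rw [mul_zero, zero_add]; field_simp

/-- Stationary performance of TSR-DFT: if `m` is additionally continuous on `(0, ∞)`
and `1/m(η) − η > 0` for all `η > 0`, then the limit `η^∞` of the TSR state-evolution
SNR sequence exists, lies in `(0, M/(N·σ²)]`, and satisfies the fixed-point equation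
`σ²·m(η^∞)·(η^∞)² − (m(η^∞) + σ²)·η^∞ + M/N = 0` (equation (34)). -/
theorem tsr_stationary_performance (M N σ2 : ℝ) (hM : 0 < M) (hMN : M < N) (hσ2 : 0 < σ2)
    (m : ℝ → ℝ)
    (hm : ∀ η > (0 : ℝ), 0 < m η ∧ m η ≤ 1 / (1 + η))
    (hf : ∀ η₁ η₂ : ℝ, 0 < η₁ → η₁ ≤ η₂ → 1 / m η₁ - η₁ ≤ 1 / m η₂ - η₂)
    (hcont : ContinuousOn m (Set.Ioi 0))
    (hfpos : ∀ η > (0 : ℝ), 0 < 1 / m η - η)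
    (v η : ℕ → ℝ) (hv0 : v 0 = 1)
    (hη : ∀ t : ℕ, η (t + 1) = (((N - M) / M) * v t + (N / M) * σ2)⁻¹)
    (hv : ∀ t : ℕ, v (t + 1) = (1 / m (η (t + 1)) - η (t + 1))⁻¹) :
    ∃ ηinf : ℝ, ηinf ∈ Set.Ioc (0 : ℝ) (M / (N * σ2)) ∧
      Tendsto (fun t : ℕ => η (t + 1)) atTop (nhds ηinf) ∧
      σ2 * m ηinf * ηinf ^ 2 - (m ηinf + σ2) * ηinf + M / N = 0 :=
  tsr_stationary_performance_general M N σ2 hM hMN hσ2 m hm hf hcont v η hv0 hη hv
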